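/- arXiv:2411.05724 — 2 statements merged into one kernel-verified Lean document; each statement's English description precedes it below -/
import Mathlib

section
/- The real projective quadric R = {[u] ∈ ℝP⁷ : u₁²+u₂²+u₃²+u₄² = u₅²+u₆²+u₇²+u₈²}, i.e. the set of points of real projective 7-space whose homogeneous coordinates satisfy this equation, equipped with the subspace topology, is homeomorphic to ℝP³ × S³. -/
/-- The 7-sphere, as the unit sphere in `ℝ⁸`. -/
abbrev Sphere7 : Type := Metric.sphere (0 : EuclideanSpace ℝ (Fin 8)) 1

/-- The 3-sphere, as the unit sphere in `ℝ⁴`. -/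
abbrev Sphere3 : Type := Metric.sphere (0 : EuclideanSpace ℝ (Fin 4)) 1

/-- Real projective 7-space, as the quotient of `S⁷` by the antipodal map
(equivalently, the projectivization of `ℝ⁸`), with the quotient topology. -/
def RP7 : Type := Quot (fun x y : Sphere7 =>
  (y : EuclideanSpace ℝ (Fin 8)) = -(x : EuclideanSpace ℝ (Fin 8)))

noncomputable instance : TopologicalSpace RP7 := by unfold RP7; infer_instance

/-- Real projective 3-space, as the quotient of `S³` by the antipodal map
(equivalently, the projectivization of `ℝ⁴`), with the quotient topology. -/
def RP3 : Type := Quot (fun x y : Sphere3 =>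
  (y : EuclideanSpace ℝ (Fin 4)) = -(x : EuclideanSpace ℝ (Fin 4)))

noncomputable instance : TopologicalSpace RP3 := by unfold RP3; infer_instance

/-- The real projective quadric `R ⊂ ℝP⁷`: the set of points whose homogeneous
coordinates `u` satisfy `u₁² + u₂² + u₃² + u₄² = u₅² + u₆² + u₇² + u₈²`.  (The equation
is homogeneous, hence independent of the choice of representative.) -/
def quadricR : Set RP7 :=
  {p | ∃ x : Sphere7,
    Quot.mk _ x = p ∧
    (x : EuclideanSpace ℝ (Fin 8)) 0 ^ 2 + (x : EuclideanSpace ℝ (Fin 8)) 1 ^ 2 +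
      (x : EuclideanSpace ℝ (Fin 8)) 2 ^ 2 + (x : EuclideanSpace ℝ (Fin 8)) 3 ^ 2 =
    (x : EuclideanSpace ℝ (Fin 8)) 4 ^ 2 + (x : EuclideanSpace ℝ (Fin 8)) 5 ^ 2 +
      (x : EuclideanSpace ℝ (Fin 8)) 6 ^ 2 + (x : EuclideanSpace ℝ (Fin 8)) 7 ^ 2}


noncomputable section AntipodalAux

/-- The antipodal relation on the unit sphere in `ℝⁿ`. -/
def aRel (n : ℕ) (x y : Metric.sphere (0 : EuclideanSpace ℝ (Fin n)) 1) : Prop :=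
  (y : EuclideanSpace ℝ (Fin n)) = -(x : EuclideanSpace ℝ (Fin n))

variable {n : ℕ}

/-- Negation on the sphere. -/
def sphNeg (x : Metric.sphere (0 : EuclideanSpace ℝ (Fin n)) 1) :
    Metric.sphere (0 : EuclideanSpace ℝ (Fin n)) 1 :=
  ⟨-(x : EuclideanSpace ℝ (Fin n)), by
    rw [mem_sphere_zero_iff_norm, norm_neg]
    exact mem_sphere_zero_iff_norm.mp x.2⟩

lemma continuous_sphNeg : Continuous (sphNeg (n := n)) :=
  Continuous.subtype_mk (continuous_subtype_val.neg) _

lemma quotMk_eq_iff (x y : Metric.sphere (0 : EuclideanSpace ℝ (Fin n)) 1) :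
    Quot.mk (aRel n) x = Quot.mk (aRel n) y ↔
      y = x ∨ (y : EuclideanSpace ℝ (Fin n)) = -(x : EuclideanSpace ℝ (Fin n)) := by
  constructor
  · intro h
    have wd : ∀ a b, aRel n a b →
        ((a : EuclideanSpace ℝ (Fin n)) = x ∨ (a : EuclideanSpace ℝ (Fin n)) = -(x : EuclideanSpace ℝ (Fin n)))
          = ((b : EuclideanSpace ℝ (Fin n)) = x ∨ (b : EuclideanSpace ℝ (Fin n)) = -(x : EuclideanSpace ℝ (Fin n))) := by
      intro a b hab
      rw [show (b : EuclideanSpace ℝ (Fin n)) = -(a : EuclideanSpace ℝ (Fin n)) from hab]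
      apply propext
      constructor
      · rintro (h1 | h1)
        · exact Or.inr (by rw [h1])
        · exact Or.inl (by rw [h1, neg_neg])
      · rintro (h1 | h1)
        · exact Or.inr (neg_eq_iff_eq_neg.mp h1)
        · exact Or.inl (by rw [← neg_neg (x : EuclideanSpace ℝ (Fin n)), ← h1, neg_neg])
    have h2 := congrArg (Quot.lift _ wd) h
    have h3 : (y : EuclideanSpace ℝ (Fin n)) = x ∨
        (y : EuclideanSpace ℝ (Fin n)) = -(x : EuclideanSpace ℝ (Fin n)) :=
      Eq.mp h2 (Or.inl rfl)
    exact h3.imp (fun h4 => Subtype.ext h4) id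
  · rintro (rfl | h1)
    · rfl
    · exact Quot.sound h1

lemma isOpenMap_quotMk : IsOpenMap (Quot.mk (aRel n)) := by
  intro U hU
  rw [← isQuotientMap_quot_mk.isOpen_preimage]
  have key : Quot.mk (aRel n) ⁻¹' (Quot.mk (aRel n) '' U) = U ∪ sphNeg ⁻¹' U := by
    ext z
    simp only [Set.mem_preimage, Set.mem_image, Set.mem_union]
    constructor
    · rintro ⟨w, hw, hwz⟩
      rcases (quotMk_eq_iff w z).mp hwz with h1 | h1
      · exact Or.inl (h1 ▸ hw)
      · refine Or.inr ?_
        have : sphNeg z = w := Subtype.ext (by simp [sphNeg, h1])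
        exact this ▸ hw
    · rintro (hz | hz)
      · exact ⟨z, hz, rfl⟩
      · exact ⟨sphNeg z, hz, (quotMk_eq_iff (sphNeg z) z).mpr (Or.inr (by simp [sphNeg]))⟩
  rw [key]
  exact hU.union (continuous_sphNeg.isOpen_preimage U hU)

lemma antipodal_t2 : T2Space (Quot (aRel n)) := by
  set S : Set ((Metric.sphere (0 : EuclideanSpace ℝ (Fin n)) 1) ×
      (Metric.sphere (0 : EuclideanSpace ℝ (Fin n)) 1)) :=
    {zw | zw.2 = zw.1 ∨
      (zw.2 : EuclideanSpace ℝ (Fin n)) = -(zw.1 : EuclideanSpace ℝ (Fin n))} with hSdef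
  constructor
  intro p q hpq
  induction p using Quot.ind with | _ x =>
  induction q using Quot.ind with | _ y =>
  have hxy : (x, y) ∈ Sᶜ := by
    intro hmem
    exact hpq ((quotMk_eq_iff x y).mpr hmem)
  have hS : IsClosed S := by
    rw [hSdef]
    apply IsClosed.union
    · exact isClosed_eq continuous_snd continuous_fst
    · exact isClosed_eq (continuous_subtype_val.comp continuous_snd)
        ((continuous_subtype_val.comp continuous_fst).neg)
  obtain ⟨U, V, hU, hV, hxU, hyV, hUV⟩ := isOpen_prod_iff.mp hS.isOpen_compl x y hxy
  refine ⟨Quot.mk _ '' U, Quot.mk _ '' V, isOpenMap_quotMk U hU, isOpenMap_quotMk V hV,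
    ⟨x, hxU, rfl⟩, ⟨y, hyV, rfl⟩, ?_⟩
  rw [Set.disjoint_left]
  rintro a ⟨u, hu, rfl⟩ ⟨v, hv, hvu⟩
  have h1 := (quotMk_eq_iff u v).mp hvu.symm
  exact hUV (Set.mk_mem_prod hu hv) h1

end AntipodalAux


open Quaternion

noncomputable section QAux

/-- ℝ⁴ → ℍ as a linear isometry equivalence. -/
def mkq : EuclideanSpace ℝ (Fin 4) → ℍ := Quaternion.linearIsometryEquivTuple.symm

lemma mkq_apply (a : EuclideanSpace ℝ (Fin 4)) : mkq a = ⟨a 0, a 1, a 2, a 3⟩ := rfl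

lemma norm_mkq (a : EuclideanSpace ℝ (Fin 4)) : ‖mkq a‖ = ‖a‖ :=
  Quaternion.linearIsometryEquivTuple.symm.norm_map a

lemma mkq_injective : Function.Injective mkq :=
  Quaternion.linearIsometryEquivTuple.symm.injective

lemma continuous_mkq : Continuous mkq :=
  Quaternion.linearIsometryEquivTuple.symm.continuous

lemma mkq_neg (a : EuclideanSpace ℝ (Fin 4)) : mkq (-a) = -(mkq a) :=
  map_neg Quaternion.linearIsometryEquivTuple.symm a

def v8 (p q : ℍ) : EuclideanSpace ℝ (Fin 8) :=
  (EuclideanSpace.equiv (Fin 8) ℝ).symm ![p.re, p.imI, p.imJ, p.imK, q.re, q.imI, q.imJ, q.imK]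

lemma v8_0 (p q : ℍ) : v8 p q 0 = p.re := rfl
lemma v8_1 (p q : ℍ) : v8 p q 1 = p.imI := rfl
lemma v8_2 (p q : ℍ) : v8 p q 2 = p.imJ := rfl
lemma v8_3 (p q : ℍ) : v8 p q 3 = p.imK := rfl
lemma v8_4 (p q : ℍ) : v8 p q 4 = q.re := rfl
lemma v8_5 (p q : ℍ) : v8 p q 5 = q.imI := rfl
lemma v8_6 (p q : ℍ) : v8 p q 6 = q.imJ := rfl
lemma v8_7 (p q : ℍ) : v8 p q 7 = q.imK := rfl

lemma norm_v8_sq (p q : ℍ) : ‖v8 p q‖ ^ 2 = ‖p‖ ^ 2 + ‖q‖ ^ 2 := by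
  rw [EuclideanSpace.norm_eq, Real.sq_sqrt (by positivity)]
  have hp : ‖p‖ ^ 2 = Quaternion.normSq p := by
    rw [sq, ← Quaternion.normSq_eq_norm_mul_self]
  have hq : ‖q‖ ^ 2 = Quaternion.normSq q := by
    rw [sq, ← Quaternion.normSq_eq_norm_mul_self]
  rw [hp, hq, Quaternion.normSq_def', Quaternion.normSq_def']
  simp only [Fin.sum_univ_eight, v8_0, v8_1, v8_2, v8_3, v8_4, v8_5, v8_6, v8_7,
    Real.norm_eq_abs, sq_abs]
  ring

lemma v8_neg (p q : ℍ) : v8 (-p) (-q) = -(v8 p q) := by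
  ext i
  fin_cases i <;> rfl

lemma v8_inj {p q p' q' : ℍ} (h : v8 p q = v8 p' q') : p = p' ∧ q = q' := by
  constructor
  · ext
    · exact congrArg (fun v => v 0) h
    · exact congrArg (fun v => v 1) h
    · exact congrArg (fun v => v 2) h
    · exact congrArg (fun v => v 3) h
  · ext
    · exact congrArg (fun v => v 4) h
    · exact congrArg (fun v => v 5) h
    · exact congrArg (fun v => v 6) h
    · exact congrArg (fun v => v 7) h

end QAux

open Quaternion

noncomputable section MainAux

lemma sphere_norm_one {n : ℕ} (x : Metric.sphere (0 : EuclideanSpace ℝ (Fin n)) 1) :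
    ‖(x : EuclideanSpace ℝ (Fin n))‖ = 1 := mem_sphere_zero_iff_norm.mp x.2

lemma norm_mkq_sphere (a : Sphere3) : ‖mkq (a : EuclideanSpace ℝ (Fin 4))‖ = 1 := by
  rw [norm_mkq]; exact sphere_norm_one a

lemma mkq_sphere_ne_zero (a : Sphere3) : mkq (a : EuclideanSpace ℝ (Fin 4)) ≠ 0 := by
  intro h
  have := norm_mkq_sphere a
  rw [h, norm_zero] at this
  norm_num at this

lemma sqrt2_ne_zero : (Real.sqrt 2) ≠ 0 := by positivity

lemma sqrt2_inv_ne_zero : (Real.sqrt 2)⁻¹ ≠ 0 := inv_ne_zero sqrt2_ne_zero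

def gmap (a c : Sphere3) : Sphere7 :=
  ⟨(Real.sqrt 2)⁻¹ • v8 (mkq a) (mkq a * mkq c), by
    rw [mem_sphere_zero_iff_norm, norm_smul]
    have hv : ‖v8 (mkq a) (mkq a * mkq c)‖ ^ 2 = 2 := by
      rw [norm_v8_sq, norm_mul, norm_mkq_sphere, norm_mkq_sphere]; norm_num
    have hv' : ‖v8 (mkq a) (mkq a * mkq c)‖ = Real.sqrt 2 := by
      rw [← Real.sqrt_sq (norm_nonneg _), hv]
    rw [hv', Real.norm_eq_abs, abs_inv, abs_of_nonneg (Real.sqrt_nonneg 2),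
      inv_mul_cancel₀ sqrt2_ne_zero]⟩

lemma gmap_coe (a c : Sphere3) :
    ((gmap a c : Sphere7) : EuclideanSpace ℝ (Fin 8))
      = (Real.sqrt 2)⁻¹ • v8 (mkq a) (mkq a * mkq c) := rfl

lemma gmap_apply (a c : Sphere3) (i : Fin 8) :
    ((gmap a c : Sphere7) : EuclideanSpace ℝ (Fin 8)) i
      = (Real.sqrt 2)⁻¹ * v8 (mkq a) (mkq a * mkq c) i := rfl

lemma gmap_mem (a c : Sphere3) : (Quot.mk _ (gmap a c) : RP7) ∈ quadricR := by
  refine ⟨gmap a c, rfl, ?_⟩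
  have hp : (mkq (a : EuclideanSpace ℝ (Fin 4))).re ^ 2 + (mkq (a : EuclideanSpace ℝ (Fin 4))).imI ^ 2
      + (mkq (a : EuclideanSpace ℝ (Fin 4))).imJ ^ 2 + (mkq (a : EuclideanSpace ℝ (Fin 4))).imK ^ 2 = 1 := by
    rw [← Quaternion.normSq_def', Quaternion.normSq_eq_norm_mul_self, norm_mkq_sphere]; norm_num
  have hq : (mkq (a : EuclideanSpace ℝ (Fin 4)) * mkq (c : EuclideanSpace ℝ (Fin 4))).re ^ 2
      + (mkq (a : EuclideanSpace ℝ (Fin 4)) * mkq (c : EuclideanSpace ℝ (Fin 4))).imI ^ 2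
      + (mkq (a : EuclideanSpace ℝ (Fin 4)) * mkq (c : EuclideanSpace ℝ (Fin 4))).imJ ^ 2
      + (mkq (a : EuclideanSpace ℝ (Fin 4)) * mkq (c : EuclideanSpace ℝ (Fin 4))).imK ^ 2 = 1 := by
    rw [← Quaternion.normSq_def', Quaternion.normSq_eq_norm_mul_self, norm_mul,
      norm_mkq_sphere, norm_mkq_sphere]; norm_num
  simp only [gmap_apply, v8_0, v8_1, v8_2, v8_3, v8_4, v8_5, v8_6, v8_7]
  linear_combination ((Real.sqrt 2)⁻¹) ^ 2 * hp - ((Real.sqrt 2)⁻¹) ^ 2 * hq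

def fmap (pc : RP3 × Sphere3) : quadricR :=
  Quot.liftOn pc.1 (fun a => (⟨Quot.mk _ (gmap a pc.2), gmap_mem a pc.2⟩ : quadricR)) (by
    intro a b hab
    apply Subtype.ext
    show (Quot.mk _ (gmap a pc.2) : RP7) = Quot.mk _ (gmap b pc.2)
    have hb : b = sphNeg a := Subtype.ext hab
    subst hb
    refine (quotMk_eq_iff (gmap a pc.2) (gmap (sphNeg a) pc.2)).mpr (Or.inr ?_)
    rw [gmap_coe, gmap_coe]
    have hneg : mkq ((sphNeg a : Sphere3) : EuclideanSpace ℝ (Fin 4)) = -(mkq (a : EuclideanSpace ℝ (Fin 4))) := by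
      rw [show ((sphNeg a : Sphere3) : EuclideanSpace ℝ (Fin 4)) = -(a : EuclideanSpace ℝ (Fin 4)) from rfl, mkq_neg]
    rw [hneg, neg_mul, v8_neg, smul_neg])

lemma continuous_gmap : Continuous (fun ac : Sphere3 × Sphere3 => gmap ac.1 ac.2) := by
  apply Continuous.subtype_mk
  have h1 : Continuous fun ac : Sphere3 × Sphere3 => mkq (ac.1 : EuclideanSpace ℝ (Fin 4)) :=
    continuous_mkq.comp (continuous_subtype_val.comp continuous_fst)
  have h2 : Continuous fun ac : Sphere3 × Sphere3 => mkq (ac.2 : EuclideanSpace ℝ (Fin 4)) :=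
    continuous_mkq.comp (continuous_subtype_val.comp continuous_snd)
  have hv : Continuous fun pq : ℍ × ℍ => v8 pq.1 pq.2 := by
    apply Continuous.comp (EuclideanSpace.equiv (Fin 8) ℝ).symm.continuous
    apply continuous_pi
    intro i
    fin_cases i
    · exact Quaternion.continuous_re.comp continuous_fst
    · exact Quaternion.continuous_imI.comp continuous_fst
    · exact Quaternion.continuous_imJ.comp continuous_fst
    · exact Quaternion.continuous_imK.comp continuous_fst
    · exact Quaternion.continuous_re.comp continuous_snd
    · exact Quaternion.continuous_imI.comp continuous_snd
    · exact Quaternion.continuous_imJ.comp continuous_snd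
    · exact Quaternion.continuous_imK.comp continuous_snd
  exact (hv.comp (h1.prodMk (h1.mul h2))).const_smul (Real.sqrt 2)⁻¹

lemma continuous_fmap : Continuous fmap := by
  have hoq : IsOpenQuotientMap (Quot.mk (aRel 4)) :=
    ⟨fun q => Quot.exists_rep q, continuous_quot_mk, isOpenMap_quotMk⟩
  have hp : IsOpenQuotientMap (Prod.map (Quot.mk (aRel 4)) (id : Sphere3 → Sphere3)) :=
    hoq.prodMap IsOpenQuotientMap.id
  refine hp.isQuotientMap.continuous_iff.mpr ?_
  have heq : (fmap ∘ Prod.map (Quot.mk (aRel 4)) (id : Sphere3 → Sphere3)) = fun ac : Sphere3 × Sphere3 =>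
      (⟨Quot.mk _ (gmap ac.1 ac.2), gmap_mem ac.1 ac.2⟩ : quadricR) := rfl
  show Continuous (fun ac : Sphere3 × Sphere3 => (⟨Quot.mk _ (gmap ac.1 ac.2), gmap_mem ac.1 ac.2⟩ : quadricR))
  exact Continuous.subtype_mk (continuous_quot_mk.comp continuous_gmap) _

lemma fmap_injective : Function.Injective fmap := by
  rintro ⟨p1, c1⟩ ⟨p2, c2⟩ h
  obtain ⟨a1, rfl⟩ := Quot.exists_rep p1
  obtain ⟨a2, rfl⟩ := Quot.exists_rep p2
  have h0 : (Quot.mk _ (gmap a1 c1) : RP7) = Quot.mk _ (gmap a2 c2) := congrArg Subtype.val h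
  rcases (quotMk_eq_iff (gmap a1 c1) (gmap a2 c2)).mp h0 with h1 | h1
  · have h2 : ((gmap a2 c2 : Sphere7) : EuclideanSpace ℝ (Fin 8)) = (gmap a1 c1 : Sphere7) :=
      Subtype.ext_iff.mp h1
    rw [gmap_coe, gmap_coe] at h2
    obtain ⟨hpp, hqq⟩ := v8_inj (smul_right_injective (EuclideanSpace ℝ (Fin 8)) sqrt2_inv_ne_zero h2)
    have ha : a2 = a1 := Subtype.ext (mkq_injective hpp)
    subst ha
    have hc : c2 = c1 := Subtype.ext (mkq_injective (mul_left_cancel₀ (mkq_sphere_ne_zero a2) hqq))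
    rw [hc]
  · rw [gmap_coe, gmap_coe, ← smul_neg, ← v8_neg] at h1
    obtain ⟨hpp, hqq⟩ := v8_inj (smul_right_injective (EuclideanSpace ℝ (Fin 8)) sqrt2_inv_ne_zero h1)
    have ha : (a2 : EuclideanSpace ℝ (Fin 4)) = -(a1 : EuclideanSpace ℝ (Fin 4)) :=
      mkq_injective (by rw [hpp, ← mkq_neg])
    have hc : c2 = c1 := by
      apply Subtype.ext
      apply mkq_injective
      apply mul_left_cancel₀ (mkq_sphere_ne_zero a2)
      rw [hqq, hpp, neg_mul]
    rw [hc]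
    have : (Quot.mk _ a1 : RP3) = Quot.mk _ a2 := Quot.sound ha
    rw [this]

def pOf (x : EuclideanSpace ℝ (Fin 8)) : ℍ :=
  ⟨Real.sqrt 2 * x 0, Real.sqrt 2 * x 1, Real.sqrt 2 * x 2, Real.sqrt 2 * x 3⟩

def qOf (x : EuclideanSpace ℝ (Fin 8)) : ℍ :=
  ⟨Real.sqrt 2 * x 4, Real.sqrt 2 * x 5, Real.sqrt 2 * x 6, Real.sqrt 2 * x 7⟩

lemma v8_pq (x : EuclideanSpace ℝ (Fin 8)) (i : Fin 8) :
    v8 (pOf x) (qOf x) i = Real.sqrt 2 * x i := by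
  fin_cases i <;> rfl

lemma gmap_eq (a c : Sphere3) {p q : ℍ} (hap : mkq (a : EuclideanSpace ℝ (Fin 4)) = p)
    (hcq : mkq (c : EuclideanSpace ℝ (Fin 4)) = star p * q) (hnp : Quaternion.normSq p = 1) :
    ((gmap a c : Sphere7) : EuclideanSpace ℝ (Fin 8)) = (Real.sqrt 2)⁻¹ • v8 p q := by
  rw [gmap_coe, hap, hcq, ← mul_assoc, Quaternion.self_mul_star, hnp]
  norm_num

set_option maxHeartbeats 1000000 in
lemma fmap_surjective : Function.Surjective fmap := by
  rintro ⟨P, x, hx, heq⟩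
  have hs2 : Real.sqrt 2 ^ 2 = 2 := Real.sq_sqrt (by norm_num)
  have h1 : ((x : EuclideanSpace ℝ (Fin 8)) 0) ^ 2 + ((x : EuclideanSpace ℝ (Fin 8)) 1) ^ 2
      + ((x : EuclideanSpace ℝ (Fin 8)) 2) ^ 2 + ((x : EuclideanSpace ℝ (Fin 8)) 3) ^ 2
      + ((x : EuclideanSpace ℝ (Fin 8)) 4) ^ 2 + ((x : EuclideanSpace ℝ (Fin 8)) 5) ^ 2
      + ((x : EuclideanSpace ℝ (Fin 8)) 6) ^ 2 + ((x : EuclideanSpace ℝ (Fin 8)) 7) ^ 2 = 1 := by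
    have hn : ‖(x : EuclideanSpace ℝ (Fin 8))‖ ^ 2 = 1 := by rw [sphere_norm_one x]; norm_num
    rw [EuclideanSpace.norm_eq, Real.sq_sqrt (by positivity)] at hn
    simpa only [Fin.sum_univ_eight, Real.norm_eq_abs, sq_abs] using hn
  have hfirst : ((x : EuclideanSpace ℝ (Fin 8)) 0) ^ 2 + ((x : EuclideanSpace ℝ (Fin 8)) 1) ^ 2
      + ((x : EuclideanSpace ℝ (Fin 8)) 2) ^ 2 + ((x : EuclideanSpace ℝ (Fin 8)) 3) ^ 2 = 1 / 2 := by
    linarith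
  have hsecond : ((x : EuclideanSpace ℝ (Fin 8)) 4) ^ 2 + ((x : EuclideanSpace ℝ (Fin 8)) 5) ^ 2
      + ((x : EuclideanSpace ℝ (Fin 8)) 6) ^ 2 + ((x : EuclideanSpace ℝ (Fin 8)) 7) ^ 2 = 1 / 2 := by
    linarith
  have hnsqp : Quaternion.normSq (pOf (x : EuclideanSpace ℝ (Fin 8))) = 1 := by
    rw [Quaternion.normSq_def']
    show (Real.sqrt 2 * (x : EuclideanSpace ℝ (Fin 8)) 0) ^ 2
      + (Real.sqrt 2 * (x : EuclideanSpace ℝ (Fin 8)) 1) ^ 2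
      + (Real.sqrt 2 * (x : EuclideanSpace ℝ (Fin 8)) 2) ^ 2
      + (Real.sqrt 2 * (x : EuclideanSpace ℝ (Fin 8)) 3) ^ 2 = 1
    linear_combination (((x : EuclideanSpace ℝ (Fin 8)) 0) ^ 2 + ((x : EuclideanSpace ℝ (Fin 8)) 1) ^ 2
      + ((x : EuclideanSpace ℝ (Fin 8)) 2) ^ 2 + ((x : EuclideanSpace ℝ (Fin 8)) 3) ^ 2) * hs2
      + 2 * hfirst
  have hnsqq : Quaternion.normSq (qOf (x : EuclideanSpace ℝ (Fin 8))) = 1 := by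
    rw [Quaternion.normSq_def']
    show (Real.sqrt 2 * (x : EuclideanSpace ℝ (Fin 8)) 4) ^ 2
      + (Real.sqrt 2 * (x : EuclideanSpace ℝ (Fin 8)) 5) ^ 2
      + (Real.sqrt 2 * (x : EuclideanSpace ℝ (Fin 8)) 6) ^ 2
      + (Real.sqrt 2 * (x : EuclideanSpace ℝ (Fin 8)) 7) ^ 2 = 1
    linear_combination (((x : EuclideanSpace ℝ (Fin 8)) 4) ^ 2 + ((x : EuclideanSpace ℝ (Fin 8)) 5) ^ 2
      + ((x : EuclideanSpace ℝ (Fin 8)) 6) ^ 2 + ((x : EuclideanSpace ℝ (Fin 8)) 7) ^ 2) * hs2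
      + 2 * hsecond
  have hnp : ‖pOf (x : EuclideanSpace ℝ (Fin 8))‖ = 1 := by
    have h3 := Quaternion.normSq_eq_norm_mul_self (pOf (x : EuclideanSpace ℝ (Fin 8)))
    rw [hnsqp] at h3
    nlinarith [norm_nonneg (pOf (x : EuclideanSpace ℝ (Fin 8))),
      sq_nonneg (‖pOf (x : EuclideanSpace ℝ (Fin 8))‖ - 1)]
  have hnq : ‖qOf (x : EuclideanSpace ℝ (Fin 8))‖ = 1 := by
    have h3 := Quaternion.normSq_eq_norm_mul_self (qOf (x : EuclideanSpace ℝ (Fin 8)))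
    rw [hnsqq] at h3
    nlinarith [norm_nonneg (qOf (x : EuclideanSpace ℝ (Fin 8))),
      sq_nonneg (‖qOf (x : EuclideanSpace ℝ (Fin 8))‖ - 1)]
  have hmem_a : Quaternion.linearIsometryEquivTuple (pOf (x : EuclideanSpace ℝ (Fin 8)))
      ∈ Metric.sphere (0 : EuclideanSpace ℝ (Fin 4)) 1 := by
    rw [mem_sphere_zero_iff_norm, LinearIsometryEquiv.norm_map]; exact hnp
  have hmem_c : Quaternion.linearIsometryEquivTuple
      (star (pOf (x : EuclideanSpace ℝ (Fin 8))) * qOf (x : EuclideanSpace ℝ (Fin 8)))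
      ∈ Metric.sphere (0 : EuclideanSpace ℝ (Fin 4)) 1 := by
    rw [mem_sphere_zero_iff_norm, LinearIsometryEquiv.norm_map, norm_mul, norm_star, hnp, hnq]
    norm_num
  refine ⟨(Quot.mk _ ⟨_, hmem_a⟩, ⟨_, hmem_c⟩), ?_⟩
  apply Subtype.ext
  show (Quot.mk _ (gmap ⟨_, hmem_a⟩ ⟨_, hmem_c⟩) : RP7) = P
  rw [← hx]
  refine congrArg _ (Subtype.ext ?_)
  rw [gmap_eq ⟨_, hmem_a⟩ ⟨_, hmem_c⟩ (Quaternion.linearIsometryEquivTuple.symm_apply_apply _)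
    (Quaternion.linearIsometryEquivTuple.symm_apply_apply _) hnsqp]
  ext i
  rw [PiLp.smul_apply, v8_pq, smul_eq_mul, ← mul_assoc, inv_mul_cancel₀ sqrt2_ne_zero, one_mul]

instance : T2Space RP7 := by unfold RP7; exact antipodal_t2
instance : CompactSpace RP3 := by unfold RP3; infer_instance

end MainAux

/-- The projective quadric `R`, with the subspace topology, is homeomorphic to
`ℝP³ × S³`. -/
theorem quadric_homeomorph_RP3_prod_sphere :
    Nonempty (quadricR ≃ₜ RP3 × Sphere3) := by
  exact ⟨(Continuous.homeoOfEquivCompactToT2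
    (f := Equiv.ofBijective fmap ⟨fmap_injective, fmap_surjective⟩)
    (by exact continuous_fmap)).symm⟩
end

section
/- Let P be an abelian group which is either trivial or isomorphic to (ℤ/2ℤ)². Then there do not exist an abelian group M together with group homomorphisms f : (ℤ/2ℤ)⁴ → P, g : P → M, a : P → (ℤ/2ℤ)⁴, b : (ℤ/2ℤ)⁴ → M, and c : M → P such that the sequence (ℤ/2ℤ)⁴ →f P →g M → 0 is exact and the sequence P →a (ℤ/2ℤ)⁴ →b M →c P → 0 is exact. -/
/-- Let `P` be an abelian group which is either trivial or isomorphic to `(ℤ/2)²`.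
Then there is no abelian group `M` fitting into both exact sequences
`(ℤ/2)⁴ →f P →g M → 0` and `P →a (ℤ/2)⁴ →b M →c P → 0`. -/
theorem no_such_abelian_group' (P : Type) [AddCommGroup P]
    (hP : Subsingleton P ∨ Nonempty (P ≃+ (Fin 2 → ZMod 2)))
    (M : Type) [AddCommGroup M]
    (f : (Fin 4 → ZMod 2) →+ P)
    (g : P →+ M)
    (a : P →+ (Fin 4 → ZMod 2))
    (b : (Fin 4 → ZMod 2) →+ M)
    (c : M →+ P)
    (hfg : f.range = g.ker) (hg : Function.Surjective g)
    (hab : a.range = b.ker) (hbc : b.range = c.ker) (hc : Function.Surjective c) :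
    False := by
  have hPfin : Finite P := by
    obtain h | h := hP
    · exact Finite.of_subsingleton
    · obtain ⟨e⟩ := h
      exact Finite.of_equiv _ e.symm.toEquiv
  have hPcard : Nat.card P ≤ 4 := by
    obtain h | h := hP
    · have : Nat.card P = 1 := Nat.card_eq_one_iff_unique.mpr ⟨h, ⟨0⟩⟩
      omega
    · obtain ⟨e⟩ := h
      have : Nat.card P = Nat.card (Fin 2 → ZMod 2) := Nat.card_congr e.toEquiv
      rw [this]
      simp [Nat.card_eq_fintype_card]
  have hMfin : Finite M := Finite.of_surjective g hg
  have hMP : Nat.card M ≤ Nat.card P := Nat.card_le_card_of_surjective g hg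
  have h16 : Nat.card (Fin 4 → ZMod 2) = 16 := by
    simp [Nat.card_eq_fintype_card]
  -- card M = card P * card (b.range)
  have e1 : (M ⧸ c.ker) ≃+ P := QuotientAddGroup.quotientKerEquivOfSurjective c hc
  have hM : Nat.card M = Nat.card P * Nat.card c.ker := by
    rw [AddSubgroup.card_eq_card_quotient_mul_card_addSubgroup c.ker,
      Nat.card_congr e1.toEquiv]
  -- 16 = card (b.range) * card (b.ker)
  have e2 : ((Fin 4 → ZMod 2) ⧸ b.ker) ≃+ b.range := QuotientAddGroup.quotientKerEquivRange b
  have h16' : 16 = Nat.card b.range * Nat.card b.ker := by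
    rw [← h16, AddSubgroup.card_eq_card_quotient_mul_card_addSubgroup b.ker,
      Nat.card_congr e2.toEquiv]
  -- card (a.range) ≤ card P
  have haP : Nat.card a.range ≤ Nat.card P :=
    Nat.card_le_card_of_surjective a.rangeRestrict a.rangeRestrict_surjective
  have hkb : Nat.card b.ker ≤ Nat.card P := by rw [← hab]; exact haP
  have hcb : Nat.card c.ker = Nat.card b.range := by rw [← hbc]
  have hPpos : 0 < Nat.card P := Nat.card_pos
  rw [hM, hcb] at hMP
  -- card P * card b.range ≤ card P ⇒ card b.range ≤ 1
  have hbr : Nat.card b.range ≤ 1 := by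
    by_contra h
    push_neg at h
    have : Nat.card P * 2 ≤ Nat.card P * Nat.card b.range :=
      Nat.mul_le_mul_left _ h
    omega
  have hbrpos : 0 < Nat.card b.range := Nat.card_pos
  have : Nat.card b.range = 1 := le_antisymm hbr hbrpos
  rw [this, one_mul] at h16'
  omega
end
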